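/- (Generalized Noether theorem for order-2 symmetries) Let Ω be an (m+1)-form on F, X an m-multivector field with i(X)Ω = 0, and Y a vector field such that [Y,X] = Z with i(Z)Ω = 0, and such that L_Y(i(Y)Ω) = dξ for an (m−1)-form ξ. Then L(X)ξ = 0. -/

import Mathlib

/-!
Contracting `L_Y(i(Y)Ω) = dξ` with `X` and using the Schouten–Nijenhuis identity
`i([Y,X]) = L_Y ∘ i(X) ± i(X) ∘ L_Y` on `i(Y)Ω`, both `i(X) i(Y)Ω` and `i([Y,X]) i(Y)Ω` vanish
(they are `± i(Y)` of `i(X)Ω = 0` and `i(Z)Ω = 0`), hence `i(X) dξ = 0`. Since `ξ` has degree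
`m - 1 < m`, also `i(X)ξ = 0`, so both terms of `L(X)ξ = d i(X)ξ ∓ i(X) dξ` vanish.
-/

/-!
Abstract calculus of differential forms and multivector fields on a manifold `E`
(in the sense of the appendix of the paper): `Form` is the (ungraded) space of
differential forms, `IsDeg k ω` says `ω` is homogeneous of degree `k`; `VF` is the
space of vector fields and `MVF m` the space of `m`-multivector fields; `d` is the
exterior differential, `iV`/`iM` the interior contractions, `lieV` the Lie derivative
of forms along a vector field, `vbrk` the Lie bracket of vector fields and `sbrk` the
Schouten–Nijenhuis bracket of a vector field with an `m`-multivector field. -/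
structure MVCalc (Form : Type*) [AddCommGroup Form] (VF : Type*) (MVF : ℕ → Type*) where
  d : Form →+ Form
  iV : VF → Form →+ Form
  iM : ∀ m, MVF m → Form →+ Form
  lieV : VF → Form →+ Form
  vbrk : VF → VF → VF
  sbrk : ∀ m, VF → MVF m → MVF m
  IsDeg : ℕ → Form → Prop
  /-- Cartan's magic formula `L_Y = d ∘ i(Y) + i(Y) ∘ d`. -/
  cartan : ∀ Y ω, lieV Y ω = d (iV Y ω) + iV Y (d ω)
  d_d : ∀ ω, d (d ω) = 0
  d_isDeg : ∀ {k ω}, IsDeg k ω → IsDeg (k + 1) (d ω)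
  lieV_d : ∀ Y ω, lieV Y (d ω) = d (lieV Y ω)
  /-- The Lie derivative along the Lie bracket of vector fields is the commutator. -/
  lieV_vbrk : ∀ Y₁ Y₂ ω, lieV (vbrk Y₁ Y₂) ω = lieV Y₁ (lieV Y₂ ω) - lieV Y₂ (lieV Y₁ ω)
  /-- `i([Y,Z])Ω = L(Y) i(Z)Ω − (−1)^{1+m} i(Z) L(Y)Ω` for a vector field `Y` and an
  `m`-multivector field `Z` (Schouten–Nijenhuis bracket identity). -/
  iM_sbrk : ∀ m Y (Z : MVF m) ω,
    iM m (sbrk m Y Z) ω = lieV Y (iM m Z ω) - ((-1 : ℤ) ^ (1 + m)) • iM m Z (lieV Y ω)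
  /-- Contraction of an `m`-multivector field with the 1-contraction of a vector field:
  `i(X) i(Y) Ω = (−1)^m i(Y) i(X) Ω`. -/
  iM_iV_comm : ∀ m (X : MVF m) Y ω, iM m X (iV Y ω) = ((-1 : ℤ) ^ m) • iV Y (iM m X ω)
  /-- On forms of degree `< m` the contraction with an `m`-multivector field vanishes. -/
  iM_lowDeg : ∀ m (X : MVF m) {k ω}, k < m → IsDeg k ω → iM m X ω = 0

namespace MVCalc
variable {Form : Type*} [AddCommGroup Form] {VF : Type*} {MVF : ℕ → Type*}

/-- The Lie derivative along an `m`-multivector field: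
`L(X) = d ∘ i(X) − (−1)^m i(X) ∘ d`. -/
def lieM (C : MVCalc Form VF MVF) (m : ℕ) (X : MVF m) (ω : Form) : Form :=
  C.d (C.iM m X ω) - ((-1 : ℤ) ^ m) • C.iM m X (C.d ω)

end MVCalc

namespace MVCalc

variable {Form : Type*} [AddCommGroup Form] {VF : Type*} {MVF : ℕ → Type*}
  (C : MVCalc Form VF MVF) {m : ℕ}

theorem iM_iV_eq_zero {X : MVF m} {ω : Form} (h : C.iM m X ω = 0) (Y : VF) :
    C.iM m X (C.iV Y ω) = 0 := by
  rw [C.iM_iV_comm, h, map_zero, smul_zero]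

theorem iM_lieV_eq_zero {X : MVF m} {Y : VF} {ω : Form} (hX : C.iM m X ω = 0)
    (hYX : C.iM m (C.sbrk m Y X) ω = 0) : C.iM m X (C.lieV Y ω) = 0 := by
  have h := C.iM_sbrk m Y X ω
  rw [hYX, hX, map_zero, zero_sub, eq_comm, neg_eq_zero] at h
  rcases neg_one_pow_eq_or ℤ (1 + m) with hs | hs <;> simpa [hs] using h

end MVCalc

theorem noether_theorem_order_two_general
    {Form : Type*} [AddCommGroup Form] {VF : Type*} {MVF : ℕ → Type*}
    (C : MVCalc Form VF MVF) (m : ℕ) (hm : 1 ≤ m) (Ω ξ : Form)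
    (hξ : C.IsDeg (m - 1) ξ)
    (X : MVF m) (hX : C.iM m X Ω = 0)
    (Y : VF) (Z : MVF m) (hZdef : Z = C.sbrk m Y X) (hZ : C.iM m Z Ω = 0)
    (hd : C.lieV Y (C.iV Y Ω) = C.d ξ) :
    C.lieM m X ξ = 0 := by
  have hXξ : C.iM m X ξ = 0 := C.iM_lowDeg m X (Nat.sub_lt hm one_pos) hξ
  have hXdξ : C.iM m X (C.d ξ) = 0 := by
    rw [← hd]
    exact C.iM_lieV_eq_zero (C.iM_iV_eq_zero hX Y) (hZdef ▸ C.iM_iV_eq_zero hZ Y)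
  rw [MVCalc.lieM, hXξ, hXdξ, map_zero, smul_zero, sub_zero]

/-- generalized Noether theorem for order-2 symmetries:
if `i(X)Ω = 0`, the Schouten–Nijenhuis bracket `Z = [Y,X]` satisfies `i(Z)Ω = 0`,
and `L_Y(i(Y)Ω) = dξ` for an `(m−1)`-form `ξ`, then `L(X)ξ = 0`. -/
theorem noether_theorem_order_two
    {Form : Type*} [AddCommGroup Form] {VF : Type*} {MVF : ℕ → Type*}
    (C : MVCalc Form VF MVF) (m : ℕ) (hm : 1 ≤ m) (Ω ξ : Form)
    (hΩ : C.IsDeg (m + 1) Ω) (hξ : C.IsDeg (m - 1) ξ)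
    (X : MVF m) (hX : C.iM m X Ω = 0)
    (Y : VF) (Z : MVF m) (hZdef : Z = C.sbrk m Y X) (hZ : C.iM m Z Ω = 0)
    (hd : C.lieV Y (C.iV Y Ω) = C.d ξ) :
    C.lieM m X ξ = 0 :=
  noether_theorem_order_two_general C m hm Ω ξ hξ X hX Y Z hZdef hZ hd
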